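/- Let D be a nonempty digraph with χ⃗(D) ≤ k for some integer k ≥ 1. Then there exist vertices u and w of D such that χ⃗(D[N⁺(u) ∪ N⁻(w)]) ≤ k − 1. -/

import Mathlib

/-!
Take a dicolouring of `D` with `k` colours and one nonempty colour class `C`. Since `D[C]` is
acyclic it has a sink `u` and a source `w`, so `N⁺(u) ∪ N⁻(w)` misses `C` and is dicoloured by
the remaining `k - 1` colours.
-/

/-- A set `S` of vertices of the digraph with arc relation `A` is acyclic. -/
def AcyclicSet {V : Type*} (A : V → V → Prop) (S : Set V) : Prop :=
  ∀ x, ¬ Relation.TransGen (fun a b => a ∈ S ∧ b ∈ S ∧ A a b) x x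

/-- `D[S]` can be properly dicolored with at most `n` colors. -/
def HasDicoloringOn {V : Type*} (A : V → V → Prop) (S : Set V) (n : ℕ) : Prop :=
  ∃ f : V → ℕ, (∀ v ∈ S, f v < n) ∧ ∀ i, AcyclicSet A {v | v ∈ S ∧ f v = i}

/-- The dichromatic number of `D[S]`. -/
noncomputable def dichromOn {V : Type*} (A : V → V → Prop) (S : Set V) : ℕ :=
  sInf {n | HasDicoloringOn A S n}

section

variable {V : Type*} {A : V → V → Prop} {S T : Set V}

open Relation

theorem AcyclicSet.mono (hTS : T ⊆ S) (hS : AcyclicSet A S) : AcyclicSet A T :=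
  fun x hx => hS x (TransGen.mono (fun _ _ h => ⟨hTS h.1, hTS h.2.1, h.2.2⟩) x x hx)

theorem AcyclicSet.swap (hS : AcyclicSet A S) : AcyclicSet (Function.swap A) S :=
  fun x hx => hS x (transGen_swap.mp (TransGen.mono (fun _ _ h => ⟨h.2.1, h.1, h.2.2⟩) x x hx))

theorem AcyclicSet.exists_sink [Finite V] (hS : AcyclicSet A S) (hne : S.Nonempty) :
    ∃ u ∈ S, ∀ x ∈ S, ¬ A u x := by
  let R : V → V → Prop := Function.swap (TransGen fun a b => a ∈ S ∧ b ∈ S ∧ A a b)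
  have : IsTrans V R := ⟨fun _ _ _ hab hbc => hbc.trans hab⟩
  have : Std.Irrefl R := ⟨hS⟩
  obtain ⟨u, hu, hmax⟩ := (Finite.wellFounded_of_trans_of_irrefl R).has_min S hne
  exact ⟨u, hu, fun x hx hux => hmax x hx (.single ⟨hu, hx, hux⟩)⟩

theorem AcyclicSet.exists_source [Finite V] (hS : AcyclicSet A S) (hne : S.Nonempty) :
    ∃ w ∈ S, ∀ x ∈ S, ¬ A x w :=
  hS.swap.exists_sink hne

theorem HasDicoloringOn.mono_right {m n : ℕ} (hmn : m ≤ n) :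
    HasDicoloringOn A S m → HasDicoloringOn A S n := fun ⟨f, hlt, hac⟩ =>
  ⟨f, fun v hv => (hlt v hv).trans_le hmn, hac⟩

/-- The rainbow colouring: every colour class is a single vertex. -/
theorem hasDicoloringOn_card [Fintype V] (hirr : ∀ x, ¬ A x x) :
    HasDicoloringOn A S (Fintype.card V) := by
  let e := Fintype.equivFin V
  refine ⟨fun v => e v, fun v _ => (e v).isLt, fun i x hx => ?_⟩
  have no_arc : ∀ a b, ¬ ((a ∈ S ∧ (e a : ℕ) = i) ∧ (b ∈ S ∧ (e b : ℕ) = i) ∧ A a b) := by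
    rintro a b ⟨⟨-, ha⟩, ⟨-, hb⟩, hab⟩
    obtain rfl : a = b := e.injective (Fin.ext (ha.trans hb.symm))
    exact hirr a hab
  cases hx with
  | single h => exact no_arc _ _ h
  | tail _ h => exact no_arc _ _ h

theorem HasDicoloringOn.dichromOn_le {n : ℕ} (h : HasDicoloringOn A S n) : dichromOn A S ≤ n :=
  Nat.sInf_le h

theorem HasDicoloringOn.of_dichromOn_le [Fintype V] (hirr : ∀ x, ¬ A x x) {n : ℕ}
    (h : dichromOn A S ≤ n) : HasDicoloringOn A S n :=
  (Nat.sInf_mem (s := {n | HasDicoloringOn A S n}) ⟨_, hasDicoloringOn_card hirr⟩).mono_right h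

/-- Shift the colours above `c` down by one. -/
theorem hasDicoloringOn_pred_of_forall_ne {f : V → ℕ} {n c : ℕ} (hc : c < n)
    (hlt : ∀ v ∈ S, f v < n) (hac : ∀ i, AcyclicSet A {v | v ∈ S ∧ f v = i})
    (hne : ∀ v ∈ S, f v ≠ c) : HasDicoloringOn A S (n - 1) := by
  refine ⟨fun v => if f v < c then f v else f v - 1, fun v hv => ?_, fun i => ?_⟩
  · have := hlt v hv
    have := hne v hv
    dsimp only
    split_ifs <;> omega
  · refine (hac (if i < c then i else i + 1)).mono ?_
    rintro v ⟨hv, hvi : (if f v < c then f v else f v - 1) = i⟩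
    have := hne v hv
    refine ⟨hv, ?_⟩
    split_ifs at hvi ⊢ <;> omega

end

theorem stmt12_general {V : Type*} [Fintype V] [Nonempty V] (A : V → V → Prop)
    (hirr : ∀ x, ¬ A x x) (k : ℕ) (hD : dichromOn A Set.univ ≤ k) :
    ∃ u w : V, dichromOn A ({x | A u x} ∪ {x | A x w}) ≤ k - 1 := by
  obtain ⟨f, hlt, hac⟩ := HasDicoloringOn.of_dichromOn_le hirr hD
  obtain ⟨v₀⟩ := ‹Nonempty V›
  have hv₀ : v₀ ∈ {v | v ∈ Set.univ ∧ f v = f v₀} := ⟨trivial, rfl⟩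
  obtain ⟨u, -, hu_sink⟩ := (hac (f v₀)).exists_sink ⟨v₀, hv₀⟩
  obtain ⟨w, -, hw_source⟩ := (hac (f v₀)).exists_source ⟨v₀, hv₀⟩
  refine ⟨u, w, HasDicoloringOn.dichromOn_le (hasDicoloringOn_pred_of_forall_ne (hlt v₀ trivial)
    (fun v _ => hlt v trivial) (fun i => (hac i).mono ?_) ?_)⟩
  · exact fun _ hv => ⟨trivial, hv.2⟩
  · rintro v (huv | hvw) hv
    · exact hu_sink v ⟨trivial, hv⟩ huv
    · exact hw_source v ⟨trivial, hv⟩ hvw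

/-- If `D` is a nonempty digraph with `χ⃗(D) ≤ k`, `k ≥ 1`, then there exist vertices
`u` and `w` with `χ⃗(D[N⁺(u) ∪ N⁻(w)]) ≤ k - 1`. -/
theorem stmt12 {V : Type*} [Fintype V] [Nonempty V] (A : V → V → Prop)
    (hirr : ∀ x, ¬ A x x) (k : ℕ) (hk : 1 ≤ k) (hD : dichromOn A Set.univ ≤ k) :
    ∃ u w : V, dichromOn A ({x | A u x} ∪ {x | A x w}) ≤ k - 1 :=
  stmt12_general A hirr k hD
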